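/- Let k be a positive integer and let p be a pattern containing exactly k distinct variables. If p has length at least 3^k, then p is 3-avoidable; that is, there exist infinitely many words over a 3-letter alphabet having no factor that is an instance of p. -/

import Mathlib

/-- A word `w` is an instance of the pattern `p` if there is a non-erasing
substitution (equivalently, a non-erasing monoid morphism on free monoids)
sending `p` to `w`. -/
def IsInstance {Δ α : Type*} (p : List Δ) (w : List α) : Prop :=
  ∃ f : Δ → List α, (∀ v, f v ≠ []) ∧ (p.map f).flatten = w

/-- A word `w` avoids the pattern `p` if no factor of `w` is an instance of `p`. -/
def Avoids {Δ α : Type*} (w : List α) (p : List Δ) : Prop :=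
  ∀ x : List α, x <:+: w → ¬ IsInstance p x

/-!
If a variable occurs only once in a pattern, the longer side of that occurrence still satisfies
the length bound with one variable fewer. Hence `p` has a factor `q` with `|q| ≥ 3 ^ k'`, where
`k'` is its number of variables, in which every variable occurs at least twice; it suffices to
avoid `q`, and if `k' = 1` then `q` contains a cube `x x x`.

Let `a n` count the ternary words of length `n` avoiding `q`; we show `a n ≤ 5/12 a (n + 1)` by
strong induction. Of the `3 a n` one-letter extensions of avoiding words, a bad one ends with an
instance `h(q)` and is determined by `h` and the avoiding prefix in front of `h(q)`, so there are
at most `12/5 ∑ₕ (5/12) ^ |h(q)| a n` of them. As every variable occurs twice, the weight sum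
factors into convergent geometric series and is at most `(144/23) ^ k' (5/12) ^ (3 ^ k') ≤ 1/4`
when `k' ≥ 2`; for a cube the sum over `h` is replaced by one over `|u|`, with the same bound.
Hence `a (n + 1) ≥ (3 - 3/5) a n`.
-/

open Finset

section

variable {Δ α : Type*}

theorem IsInstance.ne_nil {p : List Δ} {w : List α} (h : IsInstance p w) (hp : p ≠ []) :
    w ≠ [] := by
  obtain ⟨f, hf, rfl⟩ := h
  obtain ⟨v, hv⟩ := List.exists_mem_of_ne_nil p hp
  rw [Ne, List.flatten_eq_nil_iff, not_forall]
  exact ⟨f v, fun h => hf v (h (List.mem_map_of_mem hv))⟩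

theorem avoids_nil {p : List Δ} (hp : p ≠ []) : Avoids ([] : List α) p :=
  fun _ hx h => h.ne_nil hp (List.eq_nil_of_infix_nil hx)

theorem Avoids.of_infix {p : List Δ} {w x : List α} (h : Avoids w p) (hx : x <:+: w) :
    Avoids x p :=
  fun y hy => h y (hy.trans hx)

theorem Avoids.of_infix_pattern {r p : List Δ} {w : List α} (hrp : r <:+: p) (h : Avoids w r) :
    Avoids w p := by
  rintro x hx ⟨f, hf, rfl⟩
  obtain ⟨s, t, rfl⟩ := hrp
  refine h _ (List.IsInfix.trans ?_ hx) ⟨f, hf, rfl⟩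
  simpa only [List.map_append, List.flatten_append] using
    List.infix_append (s.map f).flatten (r.map f).flatten (t.map f).flatten

theorem Avoids.exists_suffix_isInstance {p : List Δ} {w : List α} {c : α} (hw : Avoids w p)
    (h : ¬Avoids (w ++ [c]) p) : ∃ z, z <:+ w ++ [c] ∧ IsInstance p z := by
  simp only [Avoids, not_forall, not_not, List.infix_concat_iff] at h
  obtain ⟨z, hz | hz, hzp⟩ := h
  · exact ⟨z, hz, hzp⟩
  · exact absurd hzp (hw z hz)

theorem exists_infix_forall_two_le_count [DecidableEq Δ] {b : ℕ} (hb : 3 ≤ b) (p : List Δ)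
    (hlen : b ^ p.toFinset.card ≤ p.length) :
    ∃ q, q <:+: p ∧ b ^ q.toFinset.card ≤ q.length ∧ ∀ v ∈ q, 2 ≤ q.count v := by
  by_cases hdouble : ∀ v ∈ p, 2 ≤ p.count v
  · exact ⟨p, List.infix_refl p, hlen, hdouble⟩
  push Not at hdouble
  obtain ⟨x, hx, hcount⟩ := hdouble
  obtain ⟨l, r, hlr⟩ := List.append_of_mem hx
  have hxlr : x ∉ l ∧ x ∉ r := by
    simp only [hlr, List.count_append, List.count_cons_self] at hcount
    exact ⟨List.count_eq_zero.mp (by omega), List.count_eq_zero.mp (by omega)⟩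
  have hplen : p.length = l.length + r.length + 1 := by simp [hlr]; omega
  obtain ⟨c, hcp, hxc, hclen, hcshort⟩ : ∃ c, c <:+: p ∧ x ∉ c ∧ p.length ≤ 2 * c.length + 1 ∧
      c.length < p.length := by
    rcases le_total r.length l.length with h | h
    · exact ⟨l, ⟨[], x :: r, by simp [hlr]⟩, hxlr.1, by omega⟩
    · exact ⟨r, ⟨l ++ [x], [], by simp [hlr]⟩, hxlr.2, by omega⟩
  have hcard : c.toFinset.card < p.toFinset.card := by
    refine card_lt_card ((ssubset_iff_of_subset fun v hv => ?_).mpr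
      ⟨x, by simpa using hx, by simpa using hxc⟩)
    exact List.mem_toFinset.mpr (hcp.subset (List.mem_toFinset.mp hv))
  have hcbound : b ^ c.toFinset.card ≤ c.length := by
    have hpow : b ^ c.toFinset.card * b ≤ b ^ p.toFinset.card := by
      rw [← pow_succ]; exact Nat.pow_le_pow_right (by omega) hcard
    have := Nat.one_le_pow c.toFinset.card b (by omega)
    nlinarith
  obtain ⟨q, hq, hqlen, hqcount⟩ := exists_infix_forall_two_le_count hb c hcbound
  exact ⟨q, hq.trans hcp, hqlen, hqcount⟩
termination_by p.length
decreasing_by omega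

theorem exists_cube_infix_of_card_toFinset_le_one [DecidableEq Δ] {q : List Δ}
    (hcard : q.toFinset.card ≤ 1) (hlen : 3 ^ q.toFinset.card ≤ q.length) :
    ∃ x, [x, x, x] <:+: q := by
  obtain ⟨x, l, rfl⟩ :=
    List.exists_cons_of_length_pos ((Nat.one_le_pow _ _ (by norm_num)).trans hlen)
  have hcard1 : (x :: l).toFinset.card = 1 :=
    le_antisymm hcard (card_pos.mpr ⟨x, by simp⟩)
  have hall : ∀ v ∈ x :: l, v = x := fun v hv =>
    card_le_one.mp hcard v (List.mem_toFinset.mpr hv) x (by simp)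
  rw [hcard1, pow_one] at hlen
  refine ⟨x, ?_⟩
  rw [List.eq_replicate_of_mem hall, show (x :: l).length = 3 + ((x :: l).length - 3) by omega,
    List.replicate_add]
  exact (List.prefix_append _ _).isInfix

section Counting

variable (α) [Fintype α]

def wordsOfLength (n : ℕ) : Finset (List α) :=
  (univ : Finset (List.Vector α n)).map ⟨List.Vector.toList, List.Vector.toList_injective⟩

variable {α} in
@[simp]
theorem mem_wordsOfLength {n : ℕ} {w : List α} : w ∈ wordsOfLength α n ↔ w.length = n := by
  simp only [wordsOfLength, Finset.mem_map, mem_univ, true_and, Function.Embedding.coeFn_mk]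
  exact ⟨fun ⟨v, hv⟩ => hv ▸ v.toList_length, fun h => ⟨⟨w, h⟩, rfl⟩⟩

theorem card_wordsOfLength (n : ℕ) : #(wordsOfLength α n) = Fintype.card α ^ n := by
  rw [wordsOfLength, card_map, card_univ, card_vector]

def wordsOfLengthIn [DecidableEq α] (s : Finset ℕ) : Finset (List α) :=
  s.biUnion (wordsOfLength α)

variable {α} in
@[simp]
theorem mem_wordsOfLengthIn [DecidableEq α] {s : Finset ℕ} {w : List α} :
    w ∈ wordsOfLengthIn α s ↔ w.length ∈ s := by
  simp [wordsOfLengthIn]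

theorem sum_wordsOfLengthIn_pow_length [DecidableEq α] {R : Type*} [CommSemiring R]
    (s : Finset ℕ) (y : R) :
    ∑ u ∈ wordsOfLengthIn α s, y ^ u.length = ∑ ℓ ∈ s, (Fintype.card α * y) ^ ℓ := by
  rw [wordsOfLengthIn, sum_biUnion]
  · refine sum_congr rfl fun ℓ _ => ?_
    rw [sum_congr rfl fun u hu => by rw [(mem_wordsOfLength.mp hu)], sum_const,
      card_wordsOfLength, nsmul_eq_mul, mul_pow, Nat.cast_pow]
  · intro i _ j _ hij
    exact disjoint_left.mpr fun w hi hj =>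
      hij ((mem_wordsOfLength.mp hi).symm.trans (mem_wordsOfLength.mp hj))

open Classical in
noncomputable def avoiders (p : List Δ) (n : ℕ) : Finset (List α) :=
  (wordsOfLength α n).filter (Avoids · p)

variable {α} in
@[simp]
theorem mem_avoiders {p : List Δ} {n : ℕ} {w : List α} :
    w ∈ avoiders α p n ↔ w.length = n ∧ Avoids w p := by
  simp [avoiders]

theorem card_avoiders_zero {p : List Δ} (hp : p ≠ []) : #(avoiders α p 0) = 1 :=
  card_eq_one.mpr ⟨[], ext fun w => by
    simp only [mem_avoiders, List.length_eq_zero_iff, mem_singleton]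
    exact ⟨And.left, fun h => ⟨h, h ▸ avoids_nil hp⟩⟩⟩

/-- The good one-letter extensions are avoiders of length `n + 1`, and the bad ones are covered
by the words `t ++ e κ t`. -/
theorem card_mul_card_avoiders_le [DecidableEq α] {p : List Δ} {n : ℕ} {ι : Type*}
    (S : Finset ι) (d : ι → ℕ) (e : ι → List α → List α)
    (hdecode : ∀ w ∈ avoiders α p n, ∀ c, ¬Avoids (w ++ [c]) p →
      ∃ κ ∈ S, 1 ≤ d κ ∧ ∃ t, t.length + d κ = n + 1 ∧ w ++ [c] = t ++ e κ t) :
    Fintype.card α * #(avoiders α p n) ≤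
      #(avoiders α p (n + 1)) + ∑ κ ∈ S, #(avoiders α p (n + 1 - d κ)) := by
  set decode : (Σ _ : ι, List α) → List α := fun x => x.2 ++ e x.1 x.2
  have hinj : Function.Injective fun wc : List α × α => wc.1 ++ [wc.2] := by
    rintro ⟨w, c⟩ ⟨w', c'⟩ h
    obtain ⟨rfl, h⟩ := List.append_inj' h rfl
    simp_all
  have hsub : (avoiders α p n ×ˢ univ).image (fun wc : List α × α => wc.1 ++ [wc.2]) ⊆
      avoiders α p (n + 1) ∪ (S.sigma fun κ => avoiders α p (n + 1 - d κ)).image decode := by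
    simp only [subset_iff, mem_image, mem_product, mem_univ, and_true, mem_union]
    rintro _ ⟨⟨w, c⟩, hw, rfl⟩
    by_cases hwc : Avoids (w ++ [c]) p
    · exact Or.inl (mem_avoiders.mpr ⟨by simp [(mem_avoiders.mp hw).1], hwc⟩)
    obtain ⟨κ, hκ, hd, t, ht, hdec⟩ := hdecode w hw c hwc
    have htw : t <+: w := List.prefix_of_prefix_length_le ⟨_, hdec.symm⟩ ⟨[c], rfl⟩
      (by rw [(mem_avoiders.mp hw).1]; omega)
    refine Or.inr ⟨⟨κ, t⟩, mem_sigma.mpr ⟨hκ, mem_avoiders.mpr ⟨by dsimp only; omega, ?_⟩⟩,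
      hdec.symm⟩
    exact (mem_avoiders.mp hw).2.of_infix htw.isInfix
  calc Fintype.card α * #(avoiders α p n)
      = #((avoiders α p n ×ˢ univ).image fun wc : List α × α => wc.1 ++ [wc.2]) := by
        rw [card_image_of_injective _ hinj, card_product, card_univ, mul_comm]
    _ ≤ #(avoiders α p (n + 1)) + #(S.sigma fun κ => avoiders α p (n + 1 - d κ)) :=
        (card_le_card hsub).trans ((card_union_le _ _).trans (by gcongr; exact card_image_le))
    _ = _ := by rw [card_sigma]

end Counting

section Growth

variable {ι : Type*} {a : ℕ → ℕ} {r : ℚ}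

theorem le_pow_mul_of_forall_lt (hr : 0 ≤ r) {n : ℕ} (h : ∀ i < n, (a i : ℚ) ≤ r * a (i + 1)) :
    ∀ j ≤ n, (a (n - j) : ℚ) ≤ r ^ j * a n
  | 0, _ => by simp
  | j + 1, hj =>
    calc (a (n - (j + 1)) : ℚ) ≤ r * a (n - (j + 1) + 1) := h _ (by omega)
      _ = r * a (n - j) := by rw [show n - (j + 1) + 1 = n - j by omega]
      _ ≤ r * (r ^ j * a n) := by gcongr; exact le_pow_mul_of_forall_lt hr h j (by omega)
      _ = r ^ (j + 1) * a n := by ring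

/-- By strong induction `a (n + 1 - d κ) ≤ r ^ (d κ - 1) a n`, so the correction terms sum to at
most `W / r · a n`, and `a (n + 1) ≥ (m - W / r) a n ≥ a n / r`. -/
theorem le_mul_succ_of_forall_le {S : ℕ → Finset ι} {d : ι → ℕ} {m : ℕ} {W : ℚ} (hr : 0 < r)
    (hmW : 1 + W ≤ m * r) (hd : ∀ n, ∀ κ ∈ S n, 1 ≤ d κ ∧ d κ ≤ n + 1)
    (hweight : ∀ n, ∑ κ ∈ S n, r ^ d κ ≤ W)
    (hrec : ∀ n, m * a n ≤ a (n + 1) + ∑ κ ∈ S n, a (n + 1 - d κ)) (n : ℕ) :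
    (a n : ℚ) ≤ r * a (n + 1) := by
  induction n using Nat.strong_induction_on with
  | _ n ih =>
  have hback : ∀ κ ∈ S n, r * a (n + 1 - d κ) ≤ r ^ d κ * a n := by
    intro κ hκ
    obtain ⟨h1, h2⟩ := hd n κ hκ
    have h := le_pow_mul_of_forall_lt hr.le ih (d κ - 1) (by omega)
    rw [show n - (d κ - 1) = n + 1 - d κ by omega] at h
    calc r * a (n + 1 - d κ) ≤ r * (r ^ (d κ - 1) * a n) := by gcongr
      _ = r ^ d κ * a n := by rw [← mul_assoc, ← pow_succ', Nat.sub_add_cancel h1]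
  have hsum : r * ∑ κ ∈ S n, (a (n + 1 - d κ) : ℚ) ≤ W * a n :=
    calc r * ∑ κ ∈ S n, (a (n + 1 - d κ) : ℚ) ≤ ∑ κ ∈ S n, r ^ d κ * a n := by
          rw [mul_sum]; exact sum_le_sum hback
      _ = (∑ κ ∈ S n, r ^ d κ) * a n := by rw [sum_mul]
      _ ≤ W * a n := by gcongr; exact hweight n
  have hrecℚ : (m : ℚ) * a n ≤ a (n + 1) + ∑ κ ∈ S n, (a (n + 1 - d κ) : ℚ) := by
    exact_mod_cast hrec n
  nlinarith [mul_le_mul_of_nonneg_left hrecℚ hr.le,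
    mul_le_mul_of_nonneg_right hmW (Nat.cast_nonneg (α := ℚ) (a n))]

end Growth

theorem infinite_setOf_avoids_of_card_avoiders_le_mul [Fintype α] {p : List Δ} (hp : p ≠ [])
    {r : ℚ} (hr : 0 < r) (h : ∀ n, (#(avoiders α p n) : ℚ) ≤ r * #(avoiders α p (n + 1))) :
    {w : List α | Avoids w p}.Infinite := by
  have hpos : ∀ n, (0 : ℚ) < #(avoiders α p n) := by
    intro n
    induction n with
    | zero => simp [card_avoiders_zero α hp]
    | succ n ih => exact pos_of_mul_pos_right (ih.trans_le (h n)) hr.le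
  choose f hf using fun n => card_pos.mp (by exact_mod_cast hpos n)
  exact Set.infinite_of_injective_forall_mem
    (fun m n hmn => by rw [← (mem_avoiders.mp (hf m)).1, hmn, (mem_avoiders.mp (hf n)).1])
    fun n => (mem_avoiders.mp (hf n)).2

theorem sum_Icc_pow_le {K : Type*} [Field K] [LinearOrder K] [IsStrictOrderedRing K] {t : K}
    (h0 : 0 ≤ t) (h1 : t < 1) (N : ℕ) : ∑ ℓ ∈ Icc 1 N, t ^ ℓ ≤ t / (1 - t) := by
  simpa [← Finset.Ico_add_one_right_eq_Icc] using
    geom_sum_Ico_le_of_lt_one (m := 1) (n := N + 1) h0 h1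

theorem isInstance_cube_iff {x : Δ} {z : List α} :
    IsInstance [x, x, x] z ↔ ∃ u, u ≠ [] ∧ z = u ++ u ++ u := by
  constructor
  · rintro ⟨f, hf, rfl⟩
    exact ⟨f x, hf x, by simp⟩
  · rintro ⟨u, hu, rfl⟩
    exact ⟨fun _ => u, fun _ => hu, by simp⟩

/-- In a word ending with a cube `u u u`, the prefix ending with the first `u` determines the
rest, so only the length of `u` has to be remembered. -/
theorem infinite_setOf_avoids_cube (x : Δ) : {w : List (Fin 3) | Avoids w [x, x, x]}.Infinite := by
  refine infinite_setOf_avoids_of_card_avoiders_le_mul (List.cons_ne_nil _ _) (r := 5 / 12)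
    (by norm_num) (le_mul_succ_of_forall_le (m := 3) (W := 1 / 4)
      (S := fun n => Icc 1 ((n + 1) / 2)) (d := (2 * ·)) (by norm_num) (by norm_num) ?_ ?_ ?_)
  · intro n ℓ hℓ
    simp only [mem_Icc] at hℓ
    omega
  · intro n
    calc ∑ ℓ ∈ Icc 1 ((n + 1) / 2), (5 / 12 : ℚ) ^ (2 * ℓ)
        = ∑ ℓ ∈ Icc 1 ((n + 1) / 2), (25 / 144 : ℚ) ^ ℓ := by
          simp only [pow_mul]; norm_num
      _ ≤ 25 / 144 / (1 - 25 / 144) := sum_Icc_pow_le (by norm_num) (by norm_num) _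
      _ ≤ 1 / 4 := by norm_num
  · intro n
    have h := card_mul_card_avoiders_le (Fin 3) (p := [x, x, x]) (n := n) (Icc 1 ((n + 1) / 2))
      (2 * ·) (fun ℓ t => t.rtake ℓ ++ t.rtake ℓ) ?_
    · simpa using h
    intro w hw c hwc
    obtain ⟨z, ⟨y, hy⟩, hz⟩ := (mem_avoiders.mp hw).2.exists_suffix_isInstance hwc
    obtain ⟨u, hu, rfl⟩ := isInstance_cube_iff.mp hz
    have hlen : y.length + 3 * u.length = n + 1 := by
      have := congrArg List.length hy
      simp only [List.length_append, List.length_singleton, (mem_avoiders.mp hw).1] at this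
      omega
    have hu1 := List.length_pos_iff.mpr hu
    refine ⟨u.length, mem_Icc.mpr ⟨hu1, by omega⟩, by omega, y ++ u, by simp; omega, ?_⟩
    simp [List.rtake, ← hy]

section Substitution

variable [DecidableEq Δ] (q : List Δ)

theorem length_flatten_map_attach (κ : {v // v ∈ q} → List α) :
    ((q.attach.map κ).flatten).length = ∑ v, q.count v.1 * (κ v).length := by
  rw [List.length_flatten, List.map_map, sum_list_map_count]
  refine sum_congr (eq_univ_of_forall fun v => by simp) fun v _ => ?_
  rw [smul_eq_mul, Function.comp_apply]
  congr 1
  convert List.count_attach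

theorem sum_univ_count_eq_length : ∑ v : {v // v ∈ q}, q.count v.1 = q.length := by
  rw [← sum_subtype q.toFinset (fun _ => List.mem_toFinset) (q.count ·),
    List.sum_toFinset_count_eq_length]

theorem sum_piFinset_pow_length_flatten {R : Type*} [CommSemiring R] (T : Finset (List α))
    (x : R) :
    ∑ κ ∈ Fintype.piFinset fun _ : {v // v ∈ q} => T, x ^ ((q.attach.map κ).flatten).length =
      ∏ v : {v // v ∈ q}, ∑ u ∈ T, (x ^ q.count v.1) ^ u.length := by
  rw [prod_univ_sum]
  refine sum_congr rfl fun κ _ => ?_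
  simp only [length_flatten_map_attach, ← pow_mul, prod_pow_eq_pow_sum]

end Substitution

theorem sum_wordsOfLengthIn_pow_length_le {c : ℕ} (hc : 2 ≤ c) (N : ℕ) :
    ∑ u ∈ wordsOfLengthIn (Fin 3) (Icc 1 N), ((5 / 12 : ℚ) ^ c) ^ u.length ≤
      144 / 23 * (5 / 12) ^ c := by
  have hc' : (5 / 12 : ℚ) ^ c ≤ (5 / 12) ^ 2 :=
    pow_le_pow_of_le_one (by norm_num) (by norm_num) hc
  have hpos : (0 : ℚ) ≤ (5 / 12) ^ c := by positivity
  rw [sum_wordsOfLengthIn_pow_length, Fintype.card_fin, Nat.cast_ofNat]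
  calc ∑ ℓ ∈ Icc 1 N, (3 * (5 / 12 : ℚ) ^ c) ^ ℓ
      ≤ 3 * (5 / 12) ^ c / (1 - 3 * (5 / 12) ^ c) :=
        sum_Icc_pow_le (by positivity) (by norm_num at hc'; linarith) N
    _ ≤ 144 / 23 * (5 / 12) ^ c := by
        rw [div_le_iff₀ (by norm_num at hc'; linarith)]
        norm_num at hc' ⊢
        nlinarith

theorem pow_mul_pow_three_pow_le {k : ℕ} (hk : 2 ≤ k) :
    (144 / 23 : ℚ) ^ k * (5 / 12) ^ 3 ^ k ≤ 1 / 4 := by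
  induction k, hk using Nat.le_induction with
  | base => norm_num
  | succ k hk ih =>
    have h9 : 18 ≤ 2 * 3 ^ k := by
      have := Nat.pow_le_pow_right (by norm_num : 0 < 3) hk
      omega
    have hstep : (144 / 23 : ℚ) * (5 / 12) ^ (2 * 3 ^ k) ≤ 1 :=
      calc (144 / 23 : ℚ) * (5 / 12) ^ (2 * 3 ^ k) ≤ 144 / 23 * (5 / 12) ^ 18 := by
            gcongr ?_ * ?_
            exact pow_le_pow_of_le_one (by norm_num) (by norm_num) h9
        _ ≤ 1 := by norm_num
    calc (144 / 23 : ℚ) ^ (k + 1) * (5 / 12) ^ 3 ^ (k + 1)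
        = ((144 / 23) ^ k * (5 / 12) ^ 3 ^ k) * (144 / 23 * (5 / 12) ^ (2 * 3 ^ k)) := by
          rw [pow_succ 3, mul_comm _ 3, show 3 * 3 ^ k = 3 ^ k + 2 * 3 ^ k by ring, pow_add]
          ring
      _ ≤ 1 / 4 * 1 := by gcongr
      _ = 1 / 4 := mul_one _

/-- The key of a bad extension ending with `h(q)` is the restriction `κ` of `h` to the variables
of `q`; the weights `(5/12) ^ |κ(q)|` factor over the variables. -/
theorem infinite_setOf_avoids_of_two_le_count [DecidableEq Δ] {q : List Δ}
    (hcount : ∀ v ∈ q, 2 ≤ q.count v) (hk : 2 ≤ q.toFinset.card)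
    (hlen : 3 ^ q.toFinset.card ≤ q.length) : {w : List (Fin 3) | Avoids w q}.Infinite := by
  have hq : q ≠ [] := by rintro rfl; simp at hk
  set image : ({v // v ∈ q} → List (Fin 3)) → List (Fin 3) := fun κ => (q.attach.map κ).flatten
  set keys : ℕ → Finset ({v // v ∈ q} → List (Fin 3)) := fun n =>
    Fintype.piFinset (fun _ => wordsOfLengthIn (Fin 3) (Icc 1 (n + 1)))
  refine infinite_setOf_avoids_of_card_avoiders_le_mul hq (r := 5 / 12) (by norm_num)
    (le_mul_succ_of_forall_le (m := 3) (W := 1 / 4) (by norm_num) (by norm_num)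
      (S := fun n => (keys n).filter fun κ => (image κ).length ≤ n + 1)
      (d := fun κ => (image κ).length) ?_ ?_ ?_)
  · intro n κ hκ
    simp only [keys, mem_filter, Fintype.mem_piFinset, mem_wordsOfLengthIn, mem_Icc] at hκ
    have hne : image κ ≠ [] :=
      IsInstance.ne_nil ⟨κ, fun v => List.length_pos_iff.mp (hκ.1 v).1, rfl⟩ (by simpa using hq)
    exact ⟨List.length_pos_iff.mpr hne, hκ.2⟩
  · intro n
    calc ∑ κ ∈ (keys n).filter (fun κ => (image κ).length ≤ n + 1),
          (5 / 12 : ℚ) ^ (image κ).length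
        ≤ ∑ κ ∈ keys n, (5 / 12 : ℚ) ^ (image κ).length :=
          sum_le_sum_of_subset_of_nonneg (filter_subset _ _) fun _ _ _ => by positivity
      _ = ∏ v : {v // v ∈ q}, ∑ u ∈ wordsOfLengthIn (Fin 3) (Icc 1 (n + 1)),
            ((5 / 12 : ℚ) ^ q.count v.1) ^ u.length := sum_piFinset_pow_length_flatten q _ _
      _ ≤ ∏ v : {v // v ∈ q}, 144 / 23 * (5 / 12 : ℚ) ^ q.count v.1 :=
          prod_le_prod (fun _ _ => sum_nonneg fun _ _ => by positivity)
            fun v _ => sum_wordsOfLengthIn_pow_length_le (hcount v.1 v.2) _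
      _ = (144 / 23) ^ q.toFinset.card * (5 / 12) ^ q.length := by
          rw [prod_mul_distrib, prod_const, prod_pow_eq_pow_sum, sum_univ_count_eq_length,
            card_univ, Fintype.card_of_subtype q.toFinset fun _ => List.mem_toFinset]
      _ ≤ (144 / 23) ^ q.toFinset.card * (5 / 12) ^ 3 ^ q.toFinset.card := by
          gcongr ?_ * ?_
          exact pow_le_pow_of_le_one (by norm_num) (by norm_num) hlen
      _ ≤ 1 / 4 := pow_mul_pow_three_pow_le hk
  · intro n
    refine card_mul_card_avoiders_le (Fin 3) _ _ (fun κ _ => image κ) fun w hw c hwc => ?_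
    obtain ⟨z, ⟨t, ht⟩, h, hh, rfl⟩ := (mem_avoiders.mp hw).2.exists_suffix_isInstance hwc
    have himage : image (fun v => h v.1) = (q.map h).flatten := by
      simp only [image, List.attach_map_val]
    have hzlen : t.length + ((q.map h).flatten).length = n + 1 := by
      simpa [(mem_avoiders.mp hw).1] using congrArg List.length ht
    have hzne : (q.map h).flatten ≠ [] := IsInstance.ne_nil ⟨h, hh, rfl⟩ hq
    refine ⟨fun v => h v.1, mem_filter.mpr ⟨?_, by rw [himage]; omega⟩,
      by rw [himage]; exact List.length_pos_iff.mpr hzne, t, by rw [himage]; omega,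
      by rw [himage, ht]⟩
    simp only [keys, Fintype.mem_piFinset, mem_wordsOfLengthIn, mem_Icc]
    intro v
    have := (List.sublist_flatten_of_mem (List.mem_map_of_mem (f := h) v.2)).length_le
    exact ⟨List.length_pos_iff.mpr (hh v.1), by omega⟩

end

theorem avoid_three_of_length_ge_pow_general {Δ : Type*} [DecidableEq Δ]
    (k : ℕ) (p : List Δ)
    (hvars : p.toFinset.card = k) (hlen : 3 ^ k ≤ p.length) :
    {w : List (Fin 3) | Avoids w p}.Infinite := by
  obtain ⟨q, hqp, hqlen, hcount⟩ :=
    exists_infix_forall_two_le_count le_rfl p (hvars ▸ hlen)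
  refine Set.Infinite.mono (s := {w | Avoids w q}) (fun _ hw => hw.of_infix_pattern hqp) ?_
  rcases le_or_gt q.toFinset.card 1 with hone | htwo
  · obtain ⟨x, hcube⟩ := exists_cube_infix_of_card_toFinset_le_one hone hqlen
    exact (infinite_setOf_avoids_cube x).mono fun _ hw => hw.of_infix_pattern hcube
  · exact infinite_setOf_avoids_of_two_le_count hcount htwo hqlen

theorem avoid_three_of_length_ge_pow {Δ : Type*} [DecidableEq Δ]
    (k : ℕ) (hk : 0 < k) (p : List Δ) (hp : p ≠ [])
    (hvars : p.toFinset.card = k) (hlen : 3 ^ k ≤ p.length) :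
    {w : List (Fin 3) | Avoids w p}.Infinite :=
  avoid_three_of_length_ge_pow_general k p hvars hlen
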